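/- Let β, γ > 0, r₀ = β/γ, and let S, I be differentiable with S > 0 satisfying S' = -βSI and I' = βSI - γI. If I(t₂) = 0, then for any t₁: I(t₁) + S(t₁) - (1/r₀)·log(S(t₁)) = S(t₂) - (1/r₀)·log(S(t₂)). -/

import Mathlib

/-! Along a solution, `(I + S)' = -γ I` and `(log S)' = -β I`, so `I + S - (γ / β) log S` has zero
derivative and is constant; at a time where `I = 0` it reduces to `S - (γ / β) log S`. -/

open Real

noncomputable def sirInvariant (β γ : ℝ) (S I : ℝ → ℝ) (t : ℝ) : ℝ :=
  I t + S t - γ / β * log (S t)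

theorem hasDerivAt_sirInvariant {β γ : ℝ} (hβ : β ≠ 0) {S I : ℝ → ℝ} {t : ℝ} (hSt : S t ≠ 0)
    (hS : HasDerivAt S (-β * S t * I t) t) (hI : HasDerivAt I (β * S t * I t - γ * I t) t) :
    HasDerivAt (sirInvariant β γ S I) 0 t := by
  have h : HasDerivAt (sirInvariant β γ S I) _ t :=
    (hI.add hS).sub ((hS.log hSt).const_mul (γ / β))
  convert h using 1
  field_simp
  ring

theorem sirInvariant_eq {β γ : ℝ} (hβ : β ≠ 0) {S I : ℝ → ℝ} (hSne : ∀ t, S t ≠ 0)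
    (hS : ∀ t, HasDerivAt S (-β * S t * I t) t)
    (hI : ∀ t, HasDerivAt I (β * S t * I t - γ * I t) t) (t₁ t₂ : ℝ) :
    sirInvariant β γ S I t₁ = sirInvariant β γ S I t₂ :=
  have hderiv t := hasDerivAt_sirInvariant hβ (hSne t) (hS t) (hI t)
  is_const_of_deriv_eq_zero (fun t => (hderiv t).differentiableAt) (fun t => (hderiv t).deriv) t₁ t₂

theorem stmt10_general (β γ r₀ : ℝ) (hβ : 0 < β) (hr : r₀ = β / γ)
    (S I : ℝ → ℝ) (hSpos : ∀ t, 0 < S t)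
    (hS : ∀ t, HasDerivAt S (-β * S t * I t) t)
    (hI : ∀ t, HasDerivAt I (β * S t * I t - γ * I t) t)
    (t₂ : ℝ) (hI2 : I t₂ = 0) :
    ∀ t₁ : ℝ,
      I t₁ + S t₁ - (1 / r₀) * Real.log (S t₁)
        = S t₂ - (1 / r₀) * Real.log (S t₂) := by
  intro t₁
  have h := sirInvariant_eq hβ.ne' (fun t => (hSpos t).ne') hS hI t₁ t₂
  rw [sirInvariant, sirInvariant, hI2, zero_add] at h
  rwa [hr, one_div_div]

theorem stmt10 (β γ r₀ : ℝ) (hβ : 0 < β) (hγ : 0 < γ) (hr : r₀ = β / γ)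
    (S I : ℝ → ℝ) (hSpos : ∀ t, 0 < S t)
    (hS : ∀ t, HasDerivAt S (-β * S t * I t) t)
    (hI : ∀ t, HasDerivAt I (β * S t * I t - γ * I t) t)
    (t₂ : ℝ) (hI2 : I t₂ = 0) :
    ∀ t₁ : ℝ,
      I t₁ + S t₁ - (1 / r₀) * Real.log (S t₁)
        = S t₂ - (1 / r₀) * Real.log (S t₂) :=
  stmt10_general β γ r₀ hβ hr S I hSpos hS hI t₂ hI2
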